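/- Assume r_0 >= 1. For every n >= 1, every integer alpha_n and every gamma_n in k_v, there exists a subset T of k_v with at most q^((r^3 - r^2)/2) elements (i.e. q raised to r times binomial(r,2)) such that: for every nonzero x in L with v(x) < N_v, with phi^k(x) != 0 and Exc(phi^k(x)) false for all 0 <= k <= n-1, and with v(phi^n(x)) = alpha_n and ac(phi^n(x)) = gamma_n, one has ac(x) in T. (The angular-component part of Lemma 2.13 of the paper: the bound is uniform in n.) -/

import Mathlib

open Filter Topology Finset

universe u

section Drinfeld

variable {L : Type u} [Field L] {k : Type*} [Field k]

/-- The integer value of the valuation `v` at `y` (junk value `0` at `y = 0`). -/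
noncomputable def vz (v : L → WithTop ℤ) (y : L) : ℤ := WithTop.untopD 0 (v y)

/-- `v : L → ℤ ∪ {∞}` is a normalized discrete valuation: `v 0 = ∞`, `v` is finite and
surjective onto `ℤ` on nonzero elements, `v (x * y) = v x + v y` and
`v (x + y) ≥ min (v x) (v y)`. -/
structure IsDVal (v : L → WithTop ℤ) : Prop where
  map_zero : v 0 = ⊤
  ne_top : ∀ x : L, x ≠ 0 → v x ≠ ⊤
  map_mul : ∀ x y : L, v (x * y) = v x + v y
  add_min : ∀ x y : L, min (v x) (v y) ≤ v (x + y)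
  surj : ∀ n : ℤ, ∃ x : L, v x = (n : WithTop ℤ)

/-- `res : L → k` restricted to the valuation ring of `v` is the quotient map onto the
residue field `k` of `v`. -/
structure IsResidue (v : L → WithTop ℤ) (res : L → k) : Prop where
  map_one : res 1 = 1
  map_add : ∀ x y : L, 0 ≤ v x → 0 ≤ v y → res (x + y) = res x + res y
  map_mul : ∀ x y : L, 0 ≤ v x → 0 ≤ v y → res (x * y) = res x * res y
  eq_zero_iff : ∀ x : L, 0 ≤ v x → (res x = 0 ↔ 0 < v x)
  surj : ∀ c : k, ∃ x : L, 0 ≤ v x ∧ res x = c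

/-- The angular component of `y` at `v`, with respect to the uniformizer `π` and the
residue map `res`: the residue of `y * π ^ (-v y)`. -/
noncomputable def ac (v : L → WithTop ℤ) (π : L) (res : L → k) (y : L) : k :=
  res (y * π ^ (-(vz v y)))

/-- The `F_q`-linear map `φ(x) = ∑_{i=r₀}^{r} a i * x^(q^i)`. -/
noncomputable def phiMap (q r₀ r : ℕ) (a : ℕ → L) (x : L) : L :=
  ∑ i ∈ Finset.Icc r₀ r, a i * x ^ q ^ i

/-- The set `P_v ⊆ ℚ` of possible exceptional valuations:
`(v(a i) - v(a j))/(q^j - q^i)` for `r₀ ≤ i < j ≤ r` with `a i ≠ 0 ≠ a j`, together with `0`. -/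
def Pset (q : ℕ) (v : L → WithTop ℤ) (r₀ r : ℕ) (a : ℕ → L) : Set ℚ :=
  {0} ∪ {α : ℚ | ∃ i j : ℕ, r₀ ≤ i ∧ i < j ∧ j ≤ r ∧ a i ≠ 0 ∧ a j ≠ 0 ∧
      α = ((vz v (a i) : ℚ) - (vz v (a j) : ℚ)) / ((q : ℚ) ^ j - (q : ℚ) ^ i)}

/-- The set `J(α)` of indices where `v(a i) + q^i * α` attains its minimum. -/
def Jset (q : ℕ) (v : L → WithTop ℤ) (r₀ r : ℕ) (a : ℕ → L) (α : ℚ) : Set ℕ :=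
  {i : ℕ | r₀ ≤ i ∧ i ≤ r ∧ a i ≠ 0 ∧
    ∀ j : ℕ, r₀ ≤ j → j ≤ r → a j ≠ 0 →
      (vz v (a i) : ℚ) + (q : ℚ) ^ i * α ≤ (vz v (a j) : ℚ) + (q : ℚ) ^ j * α}

open scoped Classical in
/-- The set `R_v(α) ⊆ k_v`: `1` together with the nonzero roots of
`∑_{i ∈ J(α)} ac(a i) * X^(q^i)`. -/
noncomputable def Rset (q : ℕ) (v : L → WithTop ℤ) (π : L) (res : L → k)
    (r₀ r : ℕ) (a : ℕ → L) (α : ℚ) : Set k :=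
  {1} ∪ {γ : k | γ ≠ 0 ∧
    ∑ i ∈ Finset.Icc r₀ r,
      (if i ∈ Jset q v r₀ r a α then ac v π res (a i) * γ ^ q ^ i else 0) = 0}

/-- The exceptional condition `Exc(y)`: `v y ∈ P_v` and `ac y ∈ R_v(v y)`. -/
def Exc (q : ℕ) (v : L → WithTop ℤ) (π : L) (res : L → k)
    (r₀ r : ℕ) (a : ℕ → L) (y : L) : Prop :=
  ((vz v y : ℚ) ∈ Pset q v r₀ r a) ∧ ac v π res y ∈ Rset q v π res r₀ r a ((vz v y : ℚ))

/-- The sequence `min(0, v(φⁿ x)) / q^(r n)` whose limit is minus the local height of `x`. -/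
noncomputable def locSeq (q r : ℕ) (v : L → WithTop ℤ) (φ : L → L) (x : L) (n : ℕ) : ℝ :=
  ((min 0 (vz v (φ^[n] x)) : ℤ) : ℝ) / (q : ℝ) ^ (r * n)

/-!
If `v(x) < N_v` and `x` is not exceptional, the terms of `φ(x)` of least valuation do not
cancel: `v(φ x) = min_i (v(a_i) + q^i v(x)) < v(x)` and `ac(φ x)` is the value at `ac(x)` of the
initial form `∑_{i ∈ J(v x)} ac(a_i) X^(q^i)`. Since `v(φ x)` is strictly increasing in `v(x)`,
the value `v(φⁿ x) = αₙ` determines the whole sequence `v(φʲ x)`, and `ac(x)` lies in the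
iterated preimage of `γₙ` under the corresponding initial forms. A one-term initial form is
injective (Frobenius); one with at least two terms has fibres of size at most `q^r`. The latter
happens only when two indices tie at the slope `v(φʲ x)`, and a pair of indices in `[1, r]`
ties at no more than one slope, while the slopes `v(φʲ x)` are pairwise distinct: this gives
at most `C(r, 2)` large fibres.
-/

theorem eq_of_chain_of_eq_last {α : Type*} [LinearOrder α] {R : α → α → Prop}
    (hR : ∀ ⦃b b' c c' : α⦄, R b c → R b' c' → b < b' → c < c') {β β' : ℕ → α} {n : ℕ}
    (hβ : ∀ j < n, R (β j) (β (j + 1))) (hβ' : ∀ j < n, R (β' j) (β' (j + 1)))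
    (hn : β n = β' n) {j : ℕ} (hj : j ≤ n) : β j = β' j := by
  refine Nat.decreasingInduction (motive := fun j _ => β j = β' j) (fun j hj ih => ?_) hn hj
  rcases lt_trichotomy (β j) (β' j) with h | h | h
  · exact absurd ih (hR (hβ j hj) (hβ' j hj) h).ne
  · exact h
  · exact absurd ih (hR (hβ' j hj) (hβ j hj) h).ne'

theorem injective_pow_pow_of_charP {p : ℕ} (hp : p.Prime) [CharP k p] (s i : ℕ) :
    Function.Injective fun γ : k => γ ^ (p ^ s) ^ i := by
  have : ExpChar k p := ExpChar.prime hp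
  rw [← pow_mul]
  exact iterateFrobenius_inj k p (s * i)

theorem exists_finset_card_le_one_of_injective {α β : Type*} {f : α → β}
    (hf : Function.Injective f) (b : β) : ∃ T : Finset α, #T ≤ 1 ∧ ∀ x, f x = b → x ∈ T := by
  by_cases h : ∃ x, f x = b
  · obtain ⟨x₀, hx₀⟩ := h
    exact ⟨{x₀}, (card_singleton x₀).le, fun x hx => mem_singleton.2 (hf (hx.trans hx₀.symm))⟩
  · exact ⟨∅, by simp, fun x hx => (h ⟨x, hx⟩).elim⟩

open Polynomial in
theorem exists_finset_card_le_of_sum_pow_eq {q r : ℕ} (hq : 2 ≤ q) {J : Finset ℕ}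
    (hJ : J.Nonempty) (hJr : ∀ i ∈ J, i ≤ r) {c : ℕ → k} (hc : ∀ i ∈ J, c i ≠ 0) (t : k) :
    ∃ T : Finset k, #T ≤ q ^ r ∧ ∀ γ, ∑ i ∈ J, c i * γ ^ q ^ i = t → γ ∈ T := by
  classical
  set P : k[X] := ∑ i ∈ J, C (c i) * X ^ q ^ i
  obtain ⟨i₀, hi₀⟩ := hJ
  have hcoeff : P.coeff (q ^ i₀) = c i₀ := by
    rw [finsetSum_coeff, sum_eq_single i₀ (fun i _ hi => by
        rw [coeff_C_mul_X_pow, if_neg fun h => hi (Nat.pow_right_injective hq h.symm)])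
      (fun h => (h hi₀).elim), coeff_C_mul_X_pow, if_pos rfl]
  have hdeg : 0 < P.degree := natDegree_pos_iff_degree_pos.1 <|
    (pow_pos (by omega) i₀).trans_le (le_natDegree_of_ne_zero (hcoeff ▸ hc i₀ hi₀))
  refine ⟨(P - C t).roots.toFinset, ?_, fun γ hγ => ?_⟩
  · calc #(P - C t).roots.toFinset ≤ Multiset.card (P - C t).roots :=
          Multiset.toFinset_card_le _
      _ ≤ P.natDegree := card_roots_sub_C' hdeg
      _ ≤ q ^ r := natDegree_sum_le_of_forall_le _ _ fun i hi =>
          (natDegree_C_mul_X_pow_le _ _).trans (Nat.pow_le_pow_right (by omega) (hJr i hi))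
  · rw [Multiset.mem_toFinset, mem_roots_sub_C hdeg]
    simpa [P, eval_finsetSum] using hγ

theorem exists_finset_card_le_prod_of_fibers {α : Type*} (f : ℕ → α → α) (w : ℕ → ℕ)
    (hf : ∀ j t, ∃ T : Finset α, #T ≤ w j ∧ ∀ γ, f j γ = t → γ ∈ T) (n : ℕ) (t : α) :
    ∃ T : Finset α, #T ≤ ∏ j ∈ range n, w j ∧
      ∀ g : ℕ → α, (∀ j < n, g (j + 1) = f j (g j)) → g n = t → g 0 ∈ T := by
  classical
  induction n generalizing t with
  | zero => exact ⟨{t}, by simp, fun g _ hg => mem_singleton.2 hg⟩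
  | succ n ih =>
    obtain ⟨F, hFcard, hF⟩ := hf n t
    choose T hTcard hT using ih
    refine ⟨F.biUnion T, ?_, fun g hg hgt => mem_biUnion.2
      ⟨g n, hF _ ((hg n n.lt_succ_self).symm.trans hgt),
        hT _ g (fun j hj => hg j (by omega)) rfl⟩⟩
    rw [prod_range_succ, mul_comm]
    exact (card_biUnion_le_card_mul _ _ _ fun s _ => hTcard s).trans
      (Nat.mul_le_mul_right _ hFcard)

theorem card_filter_one_lt_card_le_choose {ι : Type*} (s : Finset ι) (J : ι → Finset ℕ)
    (r : ℕ) (hJ : ∀ j ∈ s, J j ⊆ Icc 1 r)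
    (hJJ : ∀ j ∈ s, ∀ j' ∈ s, j ≠ j' → #(J j ∩ J j') ≤ 1) :
    #{j ∈ s | 1 < #(J j)} ≤ r.choose 2 := by
  classical
  have hpair : ∀ j ∈ {j ∈ s | 1 < #(J j)}, ∃ t ⊆ J j, #t = 2 := fun j hj =>
    exists_subset_card_eq (mem_filter.1 hj).2
  choose! t ht using hpair
  calc #{j ∈ s | 1 < #(J j)} ≤ #((Icc 1 r).powersetCard 2) := by
        refine card_le_card_of_injOn t (fun j hj => ?_) (fun j hj j' hj' htt => ?_)
        · exact mem_coe.2 (mem_powersetCard.2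
            ⟨(ht j hj).1.trans (hJ j (mem_filter.1 hj).1), (ht j hj).2⟩)
        · by_contra hne
          have h2 := card_le_card (subset_inter (ht j hj).1 (htt ▸ (ht j' hj').1))
          have h1 := hJJ j (mem_filter.1 hj).1 j' (mem_filter.1 hj').1 hne
          have := (ht j hj).2
          omega
    _ = r.choose 2 := by simp

variable {v : L → WithTop ℤ} {π : L} {res : L → k}

theorem IsDVal.coe_vz (hv : IsDVal v) {x : L} (hx : x ≠ 0) : (vz v x : WithTop ℤ) = v x := by
  obtain ⟨m, hm⟩ := WithTop.ne_top_iff_exists.mp (hv.ne_top x hx)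
  simp [vz, ← hm]

theorem IsDVal.vz_mul (hv : IsDVal v) {x y : L} (hx : x ≠ 0) (hy : y ≠ 0) :
    vz v (x * y) = vz v x + vz v y := by
  have h := hv.map_mul x y
  rw [← hv.coe_vz (mul_ne_zero hx hy), ← hv.coe_vz hx, ← hv.coe_vz hy] at h
  exact_mod_cast h

theorem IsDVal.vz_one (hv : IsDVal v) : vz v (1 : L) = 0 := by
  have h := hv.vz_mul (one_ne_zero' L) one_ne_zero
  rw [mul_one] at h
  omega

theorem IsDVal.v_one (hv : IsDVal v) : v (1 : L) = 0 := by
  rw [← hv.coe_vz one_ne_zero, hv.vz_one]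
  rfl

theorem IsDVal.vz_pow (hv : IsDVal v) {x : L} (hx : x ≠ 0) (n : ℕ) :
    vz v (x ^ n) = n * vz v x := by
  induction n with
  | zero => simp [hv.vz_one]
  | succ n ih =>
    rw [pow_succ, hv.vz_mul (pow_ne_zero n hx) hx, ih]
    push_cast
    ring

theorem IsDVal.pi_ne_zero (hv : IsDVal v) (hπ : v π = 1) : π ≠ 0 := by
  rintro rfl
  simp [hv.map_zero] at hπ

theorem IsDVal.vz_zpow_pi (hv : IsDVal v) (hπ : v π = 1) (e : ℤ) : vz v (π ^ e) = e := by
  have hπ0 := hv.pi_ne_zero hπ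
  have hvzπ : vz v π = 1 := by simp [vz, hπ]
  induction e using Int.induction_on with
  | zero => simp [hv.vz_one]
  | succ e ih => rw [zpow_add_one₀ hπ0, hv.vz_mul (zpow_ne_zero _ hπ0) hπ0, ih, hvzπ]
  | pred e ih =>
    have h := hv.vz_mul (zpow_ne_zero (-(e : ℤ) - 1) hπ0) hπ0
    rw [← zpow_add_one₀ hπ0, sub_add_cancel, ih, hvzπ] at h
    omega

theorem IsDVal.v_mul_zpow_pi (hv : IsDVal v) (hπ : v π = 1) {y : L} (hy : y ≠ 0) (e : ℤ) :
    v (y * π ^ e) = ((vz v y + e : ℤ) : WithTop ℤ) := by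
  have hπe := zpow_ne_zero e (hv.pi_ne_zero hπ)
  rw [← hv.coe_vz (mul_ne_zero hy hπe), hv.vz_mul hy hπe, hv.vz_zpow_pi hπ]

theorem IsDVal.v_mul_zpow_neg_vz (hv : IsDVal v) (hπ : v π = 1) {y : L} (hy : y ≠ 0) :
    v (y * π ^ (-vz v y)) = 0 := by
  rw [hv.v_mul_zpow_pi hπ hy, add_neg_cancel]
  rfl

theorem IsDVal.v_sum_nonneg (hv : IsDVal v) {ι : Type*} {s : Finset ι} {f : ι → L}
    (h : ∀ i ∈ s, 0 ≤ v (f i)) : 0 ≤ v (∑ i ∈ s, f i) :=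
  Finset.sum_induction f (fun y => 0 ≤ v y)
    (fun y z hy hz => (le_min hy hz).trans (hv.add_min y z)) (by simp [hv.map_zero]) h

theorem IsResidue.map_zero (hres : IsResidue v res) (hv : IsDVal v) : res (0 : L) = 0 :=
  (hres.eq_zero_iff 0 (by simp [hv.map_zero])).2 (by simp [hv.map_zero])

theorem IsResidue.map_sum (hres : IsResidue v res) (hv : IsDVal v) {ι : Type*} {s : Finset ι}
    {f : ι → L} (h : ∀ i ∈ s, 0 ≤ v (f i)) : res (∑ i ∈ s, f i) = ∑ i ∈ s, res (f i) := by
  classical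
  induction s using Finset.induction_on with
  | empty => simp [hres.map_zero hv]
  | insert i s hi ih =>
    have hs : ∀ j ∈ s, 0 ≤ v (f j) := fun j hj => h j (mem_insert_of_mem hj)
    rw [sum_insert hi, sum_insert hi,
      hres.map_add _ _ (h i (mem_insert_self i s)) (hv.v_sum_nonneg hs), ih hs]

theorem IsResidue.map_natCast (hres : IsResidue v res) (hv : IsDVal v) (n : ℕ) :
    res (n : L) = n := by
  simpa [hres.map_one] using
    hres.map_sum hv (s := range n) (f := fun _ => (1 : L)) fun _ _ => hv.v_one.ge

theorem IsResidue.charP (hres : IsResidue v res) (hv : IsDVal v) {p : ℕ} (hp : p.Prime)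
    [CharP L p] : CharP k p :=
  (CharP.charP_iff_prime_eq_zero hp).2 <| by
    rw [← hres.map_natCast hv, CharP.cast_eq_zero, hres.map_zero hv]

theorem ac_ne_zero (hv : IsDVal v) (hπ : v π = 1) (hres : IsResidue v res) {x : L}
    (hx : x ≠ 0) : ac v π res x ≠ 0 := by
  have h0 := hv.v_mul_zpow_neg_vz hπ hx
  rw [ac, Ne, hres.eq_zero_iff _ h0.ge, h0]
  exact lt_irrefl 0

theorem ac_one (hv : IsDVal v) (hres : IsResidue v res) : ac v π res (1 : L) = 1 := by
  simp [ac, hv.vz_one, hres.map_one]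

theorem ac_mul (hv : IsDVal v) (hπ : v π = 1) (hres : IsResidue v res) {x y : L}
    (hx : x ≠ 0) (hy : y ≠ 0) : ac v π res (x * y) = ac v π res x * ac v π res y := by
  have h : x * y * π ^ (-vz v (x * y)) = x * π ^ (-vz v x) * (y * π ^ (-vz v y)) := by
    rw [hv.vz_mul hx hy, neg_add, zpow_add₀ (hv.pi_ne_zero hπ)]
    ring
  rw [ac, h, hres.map_mul _ _ (hv.v_mul_zpow_neg_vz hπ hx).ge (hv.v_mul_zpow_neg_vz hπ hy).ge]
  rfl

theorem ac_pow (hv : IsDVal v) (hπ : v π = 1) (hres : IsResidue v res) {x : L} (hx : x ≠ 0)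
    (n : ℕ) : ac v π res (x ^ n) = ac v π res x ^ n := by
  induction n with
  | zero => simp [ac_one hv hres]
  | succ n ih => rw [pow_succ, ac_mul hv hπ hres (pow_ne_zero n hx) hx, ih, pow_succ]

theorem res_mul_zpow_pi_of_le (hv : IsDVal v) (hπ : v π = 1) (hres : IsResidue v res)
    {y : L} (hy : y ≠ 0) {m : ℤ} (hm : m ≤ vz v y) :
    res (y * π ^ (-m)) = if vz v y = m then ac v π res y else 0 := by
  split_ifs with h
  · rw [ac, h]
  · have hpos : 0 < vz v y + -m := by omega
    rw [hres.eq_zero_iff _ (by rw [hv.v_mul_zpow_pi hπ hy]; exact_mod_cast hpos.le),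
      hv.v_mul_zpow_pi hπ hy]
    exact_mod_cast hpos

theorem ne_zero_and_vz_eq_of_res_ne_zero (hv : IsDVal v) (hπ : v π = 1)
    (hres : IsResidue v res) {y : L} {m : ℤ} (h0 : 0 ≤ v (y * π ^ (-m)))
    (h : res (y * π ^ (-m)) ≠ 0) : y ≠ 0 ∧ vz v y = m := by
  have hy : y ≠ 0 := by
    rintro rfl
    rw [zero_mul, hres.map_zero hv] at h
    exact h rfl
  have hv0 : v (y * π ^ (-m)) = 0 :=
    le_antisymm (not_lt.1 fun hlt => h ((hres.eq_zero_iff _ h0).2 hlt)) h0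
  rw [hv.v_mul_zpow_pi hπ hy] at hv0
  have : vz v y + -m = 0 := by exact_mod_cast hv0
  exact ⟨hy, by omega⟩

theorem vz_sum_eq_of_leading_ac_ne_zero (hv : IsDVal v) (hπ : v π = 1)
    (hres : IsResidue v res) {ι : Type*} {s : Finset ι} {f : ι → L} {m : ℤ}
    (hf : ∀ i ∈ s, f i ≠ 0) (hm : ∀ i ∈ s, m ≤ vz v (f i))
    (hlead : ∑ i ∈ s with vz v (f i) = m, ac v π res (f i) ≠ 0) :
    ∑ i ∈ s, f i ≠ 0 ∧ vz v (∑ i ∈ s, f i) = m ∧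
      ac v π res (∑ i ∈ s, f i) = ∑ i ∈ s with vz v (f i) = m, ac v π res (f i) := by
  have hterm : ∀ i ∈ s, 0 ≤ v (f i * π ^ (-m)) := fun i hi => by
    rw [hv.v_mul_zpow_pi hπ (hf i hi)]
    exact_mod_cast (by linarith [hm i hi] : (0 : ℤ) ≤ vz v (f i) + -m)
  have hres_sum : res ((∑ i ∈ s, f i) * π ^ (-m)) =
      ∑ i ∈ s with vz v (f i) = m, ac v π res (f i) := by
    rw [sum_mul, hres.map_sum hv hterm, sum_filter]
    exact sum_congr rfl fun i hi => res_mul_zpow_pi_of_le hv hπ hres (hf i hi) (hm i hi)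
  have hnonneg : 0 ≤ v ((∑ i ∈ s, f i) * π ^ (-m)) := by
    rw [sum_mul]
    exact hv.v_sum_nonneg hterm
  obtain ⟨hne, hvz⟩ :=
    ne_zero_and_vz_eq_of_res_ne_zero hv hπ hres hnonneg (hres_sum ▸ hlead)
  exact ⟨hne, hvz, by rw [ac, hvz, hres_sum]⟩

section Slopes

variable {q r₀ r : ℕ} {a : ℕ → L}

theorem val_eq_of_mem_Jset {α : ℚ} {i i' : ℕ} (hi : i ∈ Jset q v r₀ r a α)
    (hi' : i' ∈ Jset q v r₀ r a α) :
    (vz v (a i) : ℚ) + (q : ℚ) ^ i * α = (vz v (a i') : ℚ) + (q : ℚ) ^ i' * α :=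
  le_antisymm (hi.2.2.2 i' hi'.1 hi'.2.1 hi'.2.2.1) (hi'.2.2.2 i hi.1 hi.2.1 hi.2.2.1)

theorem Jset_nonempty (har : a r = 1) (hr₀r : r₀ ≤ r) (α : ℚ) :
    (Jset q v r₀ r a α).Nonempty := by
  classical
  obtain ⟨i, hi, hmin⟩ := exists_min_image {i ∈ Icc r₀ r | a i ≠ 0}
    (fun i => (vz v (a i) : ℚ) + (q : ℚ) ^ i * α) ⟨r, by simp [hr₀r, har]⟩
  simp only [mem_filter, mem_Icc] at hi
  exact ⟨i, hi.1.1, hi.1.2, hi.2, fun j hj₁ hj₂ hj₃ => hmin j (by simp [hj₁, hj₂, hj₃])⟩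

theorem mem_Pset_of_mem_Jset (hq : 2 ≤ q) {α : ℚ} {i i' : ℕ} (hi : i ∈ Jset q v r₀ r a α)
    (hi' : i' ∈ Jset q v r₀ r a α) (hii' : i < i') : α ∈ Pset q v r₀ r a := by
  have hpow : (q : ℚ) ^ i < (q : ℚ) ^ i' := pow_lt_pow_right₀ (by exact_mod_cast hq) hii'
  refine Set.mem_union_right _ ⟨i, i', hi.1, hii', hi'.2.1, hi.2.2.1, hi'.2.2.1, ?_⟩
  rw [eq_div_iff (sub_ne_zero.2 hpow.ne')]
  linarith [val_eq_of_mem_Jset hi hi']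

theorem eq_of_mem_Jset_of_mem_Jset (hq : 2 ≤ q) {α α' : ℚ} {i i' : ℕ} (hii' : i ≠ i')
    (hi : i ∈ Jset q v r₀ r a α) (hi' : i' ∈ Jset q v r₀ r a α)
    (hj : i ∈ Jset q v r₀ r a α') (hj' : i' ∈ Jset q v r₀ r a α') : α = α' := by
  have hpow : (q : ℚ) ^ i - (q : ℚ) ^ i' ≠ 0 := fun h =>
    hii' (Nat.pow_right_injective hq (by exact_mod_cast sub_eq_zero.1 h))
  have h : ((q : ℚ) ^ i - (q : ℚ) ^ i') * (α - α') = 0 := by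
    linear_combination val_eq_of_mem_Jset hi hi' - val_eq_of_mem_Jset hj hj'
  exact sub_eq_zero.1 ((mul_eq_zero.1 h).resolve_left hpow)

theorem val_lt_of_mem_Jset_of_lt (hq : 0 < q) {α α' : ℚ} (hαα' : α < α') {i i' : ℕ}
    (hi : i ∈ Jset q v r₀ r a α) (hi' : i' ∈ Jset q v r₀ r a α') :
    (vz v (a i) : ℚ) + (q : ℚ) ^ i * α < (vz v (a i') : ℚ) + (q : ℚ) ^ i' * α' :=
  calc (vz v (a i) : ℚ) + (q : ℚ) ^ i * α
      ≤ (vz v (a i') : ℚ) + (q : ℚ) ^ i' * α := hi.2.2.2 i' hi'.1 hi'.2.1 hi'.2.2.1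
    _ < (vz v (a i') : ℚ) + (q : ℚ) ^ i' * α' := by gcongr

theorem val_lt_of_mem_Jset_of_lt_threshold (hq : 2 ≤ q) {α : ℚ} {i i₀ : ℕ}
    (hi : i ∈ Jset q v r₀ r a α) (hi₀ : i₀ ∈ Icc r₀ r) (hi₀1 : 1 ≤ i₀) (ha : a i₀ ≠ 0)
    (hα : α < -(vz v (a i₀) : ℚ) / ((q : ℚ) ^ i₀ - 1)) :
    (vz v (a i) : ℚ) + (q : ℚ) ^ i * α < α := by
  have hQ : (1 : ℚ) < (q : ℚ) ^ i₀ := one_lt_pow₀ (by exact_mod_cast hq) (by omega)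
  rw [lt_div_iff₀ (sub_pos.2 hQ)] at hα
  have hle := hi.2.2.2 i₀ (mem_Icc.1 hi₀).1 (mem_Icc.1 hi₀).2 ha
  nlinarith

open scoped Classical in
noncomputable def Jfin (q : ℕ) (v : L → WithTop ℤ) (r₀ r : ℕ) (a : ℕ → L) (α : ℚ) :
    Finset ℕ :=
  {i ∈ Icc r₀ r | i ∈ Jset q v r₀ r a α}

theorem mem_Jfin {α : ℚ} {i : ℕ} : i ∈ Jfin q v r₀ r a α ↔ i ∈ Jset q v r₀ r a α := by
  classical
  rw [Jfin, mem_filter, mem_Icc]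
  exact ⟨And.right, fun h => ⟨⟨h.1, h.2.1⟩, h⟩⟩

noncomputable def initialForm (q : ℕ) (v : L → WithTop ℤ) (π : L) (res : L → k) (r₀ r : ℕ)
    (a : ℕ → L) (α : ℚ) (γ : k) : k :=
  ∑ i ∈ Jfin q v r₀ r a α, ac v π res (a i) * γ ^ q ^ i

theorem mem_Rset_of_initialForm_eq_zero {α : ℚ} {γ : k} (hγ : γ ≠ 0)
    (h : initialForm q v π res r₀ r a α γ = 0) : γ ∈ Rset q v π res r₀ r a α := by
  classical
  refine Set.mem_union_right _ ⟨hγ, ?_⟩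
  rw [← sum_filter]
  exact h

theorem initialForm_ne_zero (hq : 2 ≤ q) (hv : IsDVal v) (hπ : v π = 1)
    (hres : IsResidue v res) (hr₀r : r₀ ≤ r) (har : a r = 1) {y : L} (hy : y ≠ 0)
    (hexc : ¬ Exc q v π res r₀ r a y) :
    initialForm q v π res r₀ r a (vz v y) (ac v π res y) ≠ 0 := by
  intro h0
  obtain ⟨i₀, hi₀⟩ := Jset_nonempty (q := q) (v := v) har hr₀r (vz v y : ℚ)
  refine hexc ⟨?_, mem_Rset_of_initialForm_eq_zero (ac_ne_zero hv hπ hres hy) h0⟩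
  by_contra hP
  have hJ : Jfin q v r₀ r a (vz v y) = {i₀} := by
    ext i
    rw [mem_Jfin, mem_singleton]
    refine ⟨fun hi => ?_, fun h => h ▸ hi₀⟩
    by_contra hne
    rcases lt_or_gt_of_ne hne with h | h
    exacts [hP (mem_Pset_of_mem_Jset hq hi hi₀ h), hP (mem_Pset_of_mem_Jset hq hi₀ hi h)]
  rw [initialForm, hJ, sum_singleton] at h0
  exact mul_ne_zero (ac_ne_zero hv hπ hres hi₀.2.2.1) (pow_ne_zero _ (ac_ne_zero hv hπ hres hy)) h0

theorem exists_finset_card_le_of_initialForm_eq (hq : 2 ≤ q)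
    (hfrob : ∀ i, Function.Injective fun γ : k => γ ^ q ^ i) (hv : IsDVal v) (hπ : v π = 1)
    (hres : IsResidue v res) (hr₀r : r₀ ≤ r) (har : a r = 1) (α : ℚ) (t : k) :
    ∃ T : Finset k, #T ≤ (if 1 < #(Jfin q v r₀ r a α) then q ^ r else 1) ∧
      ∀ γ, initialForm q v π res r₀ r a α γ = t → γ ∈ T := by
  obtain ⟨i₀, hi₀⟩ := Jset_nonempty (q := q) (v := v) har hr₀r α
  have hJ : (Jfin q v r₀ r a α).Nonempty := ⟨i₀, mem_Jfin.2 hi₀⟩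
  have hc : ∀ i ∈ Jfin q v r₀ r a α, ac v π res (a i) ≠ 0 := fun i hi =>
    ac_ne_zero hv hπ hres (mem_Jfin.1 hi).2.2.1
  split_ifs with h
  · exact exists_finset_card_le_of_sum_pow_eq hq hJ (fun i hi => (mem_Jfin.1 hi).2.1) hc t
  · obtain ⟨i, hi⟩ := card_eq_one.1 (le_antisymm (not_lt.1 h) hJ.card_pos)
    simp only [initialForm, hi, sum_singleton]
    exact exists_finset_card_le_one_of_injective
      ((mul_right_injective₀ (hc i (hi ▸ mem_singleton_self i))).comp (hfrob i)) t

theorem card_Jfin_inter_le_one (hq : 2 ≤ q) {α α' : ℚ} (h : α ≠ α') :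
    #(Jfin q v r₀ r a α ∩ Jfin q v r₀ r a α') ≤ 1 := by
  by_contra! hlt
  obtain ⟨i, hi, i', hi', hii'⟩ := one_lt_card.1 hlt
  rw [mem_inter, mem_Jfin, mem_Jfin] at hi hi'
  exact h (eq_of_mem_Jset_of_mem_Jset hq hii' hi.1 hi'.1 hi.2 hi'.2)

theorem prod_ite_card_Jfin_le_pow (hq : 2 ≤ q) (hr₀ : 1 ≤ r₀) {β : ℕ → ℚ} {n : ℕ}
    (hβ : Set.InjOn β (range n)) :
    ∏ j ∈ range n, (if 1 < #(Jfin q v r₀ r a (β j)) then q ^ r else 1) ≤ q ^ (r * r.choose 2) := by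
  rw [prod_ite, prod_const, prod_const_one, mul_one, pow_mul]
  refine Nat.pow_le_pow_right (pow_pos (by omega) r) (card_filter_one_lt_card_le_choose _ _ r
    (fun j _ i hi => ?_) fun j hj j' hj' hne =>
      card_Jfin_inter_le_one hq fun h => hne (hβ hj hj' h))
  obtain ⟨hi₁, hi₂, -⟩ := mem_Jfin.1 hi
  exact mem_Icc.2 ⟨hr₀.trans hi₁, hi₂⟩

theorem phiMap_step (hq : 2 ≤ q) (hv : IsDVal v) (hπ : v π = 1) (hres : IsResidue v res)
    (hr₀r : r₀ ≤ r) (har : a r = 1) {y : L} (hy : y ≠ 0) (hexc : ¬ Exc q v π res r₀ r a y) :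
    phiMap q r₀ r a y ≠ 0 ∧
      (∃ i ∈ Jset q v r₀ r a (vz v y),
        (vz v (phiMap q r₀ r a y) : ℚ) = vz v (a i) + (q : ℚ) ^ i * vz v y) ∧
      ac v π res (phiMap q r₀ r a y) = initialForm q v π res r₀ r a (vz v y) (ac v π res y) := by
  classical
  set S := {i ∈ Icc r₀ r | a i ≠ 0}
  have hsum : phiMap q r₀ r a y = ∑ i ∈ S, a i * y ^ q ^ i :=
    (sum_filter_of_ne fun i _ h => left_ne_zero_of_mul h).symm
  have hterm : ∀ i ∈ S, a i * y ^ q ^ i ≠ 0 := fun i hi =>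
    mul_ne_zero (mem_filter.1 hi).2 (pow_ne_zero _ hy)
  have hvz : ∀ i ∈ S, (vz v (a i * y ^ q ^ i) : ℚ) = vz v (a i) + (q : ℚ) ^ i * vz v y :=
    fun i hi => by
      rw [hv.vz_mul (mem_filter.1 hi).2 (pow_ne_zero _ hy), hv.vz_pow hy]
      push_cast
      ring
  obtain ⟨i₀, hi₀⟩ := Jset_nonempty (q := q) (v := v) har hr₀r (vz v y : ℚ)
  have hi₀S : i₀ ∈ S := mem_filter.2 ⟨mem_Icc.2 ⟨hi₀.1, hi₀.2.1⟩, hi₀.2.2.1⟩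
  set m := vz v (a i₀ * y ^ q ^ i₀)
  have hm : ∀ i ∈ S, m ≤ vz v (a i * y ^ q ^ i) := fun i hi => by
    have h := hi₀.2.2.2 i (mem_Icc.1 (mem_filter.1 hi).1).1 (mem_Icc.1 (mem_filter.1 hi).1).2
      (mem_filter.1 hi).2
    rw [← hvz i₀ hi₀S, ← hvz i hi] at h
    exact_mod_cast h
  have hlead : {i ∈ S | vz v (a i * y ^ q ^ i) = m} = Jfin q v r₀ r a (vz v y) := by
    ext i
    rw [mem_filter, mem_Jfin]
    constructor
    · rintro ⟨hi, him⟩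
      have hval : (vz v (a i) : ℚ) + (q : ℚ) ^ i * vz v y =
          (vz v (a i₀) : ℚ) + (q : ℚ) ^ i₀ * vz v y := by
        rw [← hvz i hi, ← hvz i₀ hi₀S, him]
      obtain ⟨hiI, hai⟩ := mem_filter.1 hi
      exact ⟨(mem_Icc.1 hiI).1, (mem_Icc.1 hiI).2, hai, fun j hj₁ hj₂ hj₃ =>
        hval ▸ hi₀.2.2.2 j hj₁ hj₂ hj₃⟩
    · intro hi
      have hiS : i ∈ S := mem_filter.2 ⟨mem_Icc.2 ⟨hi.1, hi.2.1⟩, hi.2.2.1⟩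
      refine ⟨hiS, ?_⟩
      have h := (hvz i hiS).trans ((val_eq_of_mem_Jset hi hi₀).trans (hvz i₀ hi₀S).symm)
      exact_mod_cast h
  have hinit : ∑ i ∈ S with vz v (a i * y ^ q ^ i) = m, ac v π res (a i * y ^ q ^ i) =
      initialForm q v π res r₀ r a (vz v y) (ac v π res y) := by
    rw [hlead, initialForm]
    refine sum_congr rfl fun i hi => ?_
    rw [ac_mul hv hπ hres (mem_Jfin.1 hi).2.2.1 (pow_ne_zero _ hy), ac_pow hv hπ hres hy]
  obtain ⟨hne, hvzφ, hac⟩ := vz_sum_eq_of_leading_ac_ne_zero hv hπ hres hterm hm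
    (hinit ▸ initialForm_ne_zero hq hv hπ hres hr₀r har hy hexc)
  rw [hsum]
  exact ⟨hne, ⟨i₀, hi₀, by rw [hvzφ, hvz i₀ hi₀S]⟩, hac.trans hinit⟩

theorem vz_phiMap_lt (hq : 2 ≤ q) (hv : IsDVal v) (hπ : v π = 1) (hres : IsResidue v res)
    (hr₀r : r₀ ≤ r) (hr₀ : 1 ≤ r₀) (har : a r = 1) {y : L} (hy : y ≠ 0)
    (hexc : ¬ Exc q v π res r₀ r a y)
    (hthr : ∃ i ∈ Icc r₀ r, a i ≠ 0 ∧ (vz v y : ℚ) < -(vz v (a i) : ℚ) / ((q : ℚ) ^ i - 1)) :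
    (vz v (phiMap q r₀ r a y) : ℚ) < vz v y := by
  obtain ⟨i₀, hi₀, ha, hlt⟩ := hthr
  obtain ⟨-, ⟨i, hi, hval⟩, -⟩ := phiMap_step hq hv hπ hres hr₀r har hy hexc
  rw [hval]
  exact val_lt_of_mem_Jset_of_lt_threshold hq hi hi₀ (hr₀.trans (mem_Icc.1 hi₀).1) ha hlt

theorem vz_iterate_succ_lt (hq : 2 ≤ q) (hv : IsDVal v) (hπ : v π = 1)
    (hres : IsResidue v res) (hr₀r : r₀ ≤ r) (hr₀ : 1 ≤ r₀) (har : a r = 1) {x : L} {n : ℕ}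
    (hthr : ∃ i ∈ Icc r₀ r, a i ≠ 0 ∧ (vz v x : ℚ) < -(vz v (a i) : ℚ) / ((q : ℚ) ^ i - 1))
    (horb : ∀ j < n, (phiMap q r₀ r a)^[j] x ≠ 0 ∧
      ¬ Exc q v π res r₀ r a ((phiMap q r₀ r a)^[j] x)) {j : ℕ} (hj : j < n) :
    (vz v ((phiMap q r₀ r a)^[j + 1] x) : ℚ) < vz v ((phiMap q r₀ r a)^[j] x) := by
  have hstep : ∀ j < n, (vz v ((phiMap q r₀ r a)^[j] x) : ℚ) ≤ vz v x →
      (vz v ((phiMap q r₀ r a)^[j + 1] x) : ℚ) < vz v ((phiMap q r₀ r a)^[j] x) := by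
    intro j hj hle
    obtain ⟨i, hi, ha, hlt⟩ := hthr
    rw [Function.iterate_succ_apply']
    exact vz_phiMap_lt hq hv hπ hres hr₀r hr₀ har (horb j hj).1 (horb j hj).2
      ⟨i, hi, ha, hle.trans_lt hlt⟩
  have hle : ∀ j ≤ n, (vz v ((phiMap q r₀ r a)^[j] x) : ℚ) ≤ vz v x := by
    intro j
    induction j with
    | zero => exact fun _ => le_rfl
    | succ j ih =>
      exact fun hj => (hstep j hj (ih (Nat.le_of_succ_le hj))).le.trans (ih (Nat.le_of_succ_le hj))
  exact hstep j hj (hle j hj.le)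

theorem vz_iterate_eq_of_vz_iterate_eq (hq : 2 ≤ q) (hv : IsDVal v) (hπ : v π = 1)
    (hres : IsResidue v res) (hr₀r : r₀ ≤ r) (har : a r = 1) {x y : L} {n : ℕ}
    (hx : ∀ j < n, (phiMap q r₀ r a)^[j] x ≠ 0 ∧
      ¬ Exc q v π res r₀ r a ((phiMap q r₀ r a)^[j] x))
    (hy : ∀ j < n, (phiMap q r₀ r a)^[j] y ≠ 0 ∧
      ¬ Exc q v π res r₀ r a ((phiMap q r₀ r a)^[j] y))
    (hn : vz v ((phiMap q r₀ r a)^[n] x) = vz v ((phiMap q r₀ r a)^[n] y)) {j : ℕ}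
    (hj : j ≤ n) : vz v ((phiMap q r₀ r a)^[j] x) = vz v ((phiMap q r₀ r a)^[j] y) := by
  have hchain : ∀ z : L, (∀ j < n, (phiMap q r₀ r a)^[j] z ≠ 0 ∧
      ¬ Exc q v π res r₀ r a ((phiMap q r₀ r a)^[j] z)) → ∀ j < n,
      ∃ i ∈ Jset q v r₀ r a (vz v ((phiMap q r₀ r a)^[j] z)),
        (vz v ((phiMap q r₀ r a)^[j + 1] z) : ℚ) =
          vz v (a i) + (q : ℚ) ^ i * vz v ((phiMap q r₀ r a)^[j] z) := fun z hz j hj => by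
    rw [Function.iterate_succ_apply']
    exact (phiMap_step hq hv hπ hres hr₀r har (hz j hj).1 (hz j hj).2).2.1
  have h := eq_of_chain_of_eq_last
    (R := fun b c => ∃ i ∈ Jset q v r₀ r a b, c = vz v (a i) + (q : ℚ) ^ i * b)
    (fun b b' c c' ⟨i, hi, hc⟩ ⟨i', hi', hc'⟩ hbb' =>
      hc ▸ hc' ▸ val_lt_of_mem_Jset_of_lt (by omega) hbb' hi hi')
    (β := fun j => (vz v ((phiMap q r₀ r a)^[j] x) : ℚ))
    (β' := fun j => (vz v ((phiMap q r₀ r a)^[j] y) : ℚ))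
    (hchain x hx) (hchain y hy) (by exact_mod_cast hn) hj
  exact_mod_cast h

end Slopes

theorem statement10_general
    (p q : ℕ) (hp : p.Prime) (hq : ∃ s : ℕ, 0 < s ∧ q = p ^ s)
    [CharP L p]
    (v : L → WithTop ℤ) (hv : IsDVal v)
    (π : L) (hπ : v π = 1) (res : L → k) (hres : IsResidue v res)
    (r₀ r : ℕ) (hr₀r : r₀ ≤ r) (hr₀1 : 1 ≤ r₀)
    (a : ℕ → L) (har : a r = 1)
    (n : ℕ) (αn : ℤ) (γn : k) :
    ∃ T : Finset k, T.card ≤ q ^ (r * Nat.choose r 2) ∧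
      ∀ x : L, x ≠ 0 →
        (∃ i ∈ Finset.Icc r₀ r, a i ≠ 0 ∧
          (vz v x : ℚ) < -(vz v (a i) : ℚ) / ((q : ℚ) ^ i - 1)) →
        (∀ j : ℕ, j < n → (phiMap q r₀ r a)^[j] x ≠ 0 ∧
          ¬ Exc q v π res r₀ r a ((phiMap q r₀ r a)^[j] x)) →
        v ((phiMap q r₀ r a)^[n] x) = (αn : WithTop ℤ) →
        ac v π res ((phiMap q r₀ r a)^[n] x) = γn →
        ac v π res x ∈ T := by
  obtain ⟨s, hs, rfl⟩ := hq
  have hq2 : 2 ≤ p ^ s := hp.two_le.trans (Nat.le_self_pow hs.ne' p)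
  have : CharP k p := hres.charP hv hp
  set φ := phiMap (p ^ s) r₀ r a
  by_cases hex : ∃ x₀ : L, (∃ i ∈ Icc r₀ r, a i ≠ 0 ∧
      (vz v x₀ : ℚ) < -(vz v (a i) : ℚ) / (((p ^ s : ℕ) : ℚ) ^ i - 1)) ∧
      (∀ j < n, φ^[j] x₀ ≠ 0 ∧ ¬ Exc (p ^ s) v π res r₀ r a (φ^[j] x₀)) ∧
      v (φ^[n] x₀) = αn
  swap
  · exact ⟨∅, by simp, fun x _ hthr horb hvn _ => (hex ⟨x, hthr, horb, hvn⟩).elim⟩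
  obtain ⟨x₀, hthr₀, horb₀, hvn₀⟩ := hex
  set β : ℕ → ℚ := fun j => vz v (φ^[j] x₀)
  obtain ⟨T, hTcard, hT⟩ := exists_finset_card_le_prod_of_fibers
    (fun j => initialForm (p ^ s) v π res r₀ r a (β j)) _
    (fun j => exists_finset_card_le_of_initialForm_eq hq2
      (injective_pow_pow_of_charP hp s) hv hπ hres hr₀r har (β j)) n γn
  have hβ : StrictAntiOn β (Set.Iic n) := strictAntiOn_Iic_of_succ_lt fun j hj =>
    vz_iterate_succ_lt hq2 hv hπ hres hr₀r hr₀1 har hthr₀ horb₀ hj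
  refine ⟨T, hTcard.trans (prod_ite_card_Jfin_le_pow hq2 hr₀1 (hβ.injOn.mono fun j hj =>
    Set.mem_Iic.2 (mem_range.1 hj).le)), fun x _ _ horb hvn hacn =>
    hT (fun j => ac v π res (φ^[j] x)) (fun j hj => ?_) hacn⟩
  have hvz : (vz v (φ^[j] x) : ℚ) = β j :=
    congrArg Int.cast <| vz_iterate_eq_of_vz_iterate_eq hq2 hv hπ hres hr₀r har horb horb₀
      (by rw [vz, vz, hvn, hvn₀]) hj.le
  rw [Function.iterate_succ_apply', ← hvz]
  exact (phiMap_step hq2 hv hπ hres hr₀r har (horb j hj).1 (horb j hj).2).2.2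

/-- The angular-component part of Lemma 2.13: if `r₀ ≥ 1`, then for each `n ≥ 1` and each
value `(αₙ, γₙ)` of `(v(φⁿ(x)), ac(φⁿ(x)))`, the angular component of `x` lies in a set of
at most `q^(r·C(r,2))` elements, uniformly in `n`, provided `v(x) < N_v` and no iterate
`φᵏ(x)`, `k < n`, is zero or exceptional. -/
theorem statement10
    (p q : ℕ) (hp : p.Prime) (hq : ∃ s : ℕ, 0 < s ∧ q = p ^ s)
    [CharP L p] (F : Subfield L) (hF : Nat.card F = q)
    (v : L → WithTop ℤ) (hv : IsDVal v)
    (π : L) (hπ : v π = 1) (res : L → k) (hres : IsResidue v res)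
    (r₀ r : ℕ) (hr1 : 1 ≤ r) (hr₀r : r₀ ≤ r) (hr₀1 : 1 ≤ r₀)
    (a : ℕ → L) (har₀ : a r₀ ≠ 0) (har : a r = 1)
    (n : ℕ) (hn : 1 ≤ n) (αn : ℤ) (γn : k) :
    ∃ T : Finset k, T.card ≤ q ^ (r * Nat.choose r 2) ∧
      ∀ x : L, x ≠ 0 →
        (∃ i ∈ Finset.Icc r₀ r, a i ≠ 0 ∧
          (vz v x : ℚ) < -(vz v (a i) : ℚ) / ((q : ℚ) ^ i - 1)) →
        (∀ j : ℕ, j < n → (phiMap q r₀ r a)^[j] x ≠ 0 ∧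
          ¬ Exc q v π res r₀ r a ((phiMap q r₀ r a)^[j] x)) →
        v ((phiMap q r₀ r a)^[n] x) = (αn : WithTop ℤ) →
        ac v π res ((phiMap q r₀ r a)^[n] x) = γn →
        ac v π res x ∈ T :=
  statement10_general p q hp hq v hv π hπ res hres r₀ r hr₀r hr₀1 a har n αn γn

end Drinfeld
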